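/- arXiv:2003.01569 — 5 statements merged into one kernel-verified Lean document; each statement's English description precedes it below -/
import Mathlib

section
/- Let λ, c₁, c₂ ∈ (0, ∞) and T ∈ (0, ∞). Suppose f : [0, T] → [0, ∞) is differentiable on [0, T] (one-sided derivatives at the endpoints) and satisfies f′(t) + c₁·f(t)^{1+λ} ≤ c₂ for every t ∈ [0, T]. Then for every t ∈ (0, T] one has f(t) ≤ max{ (2/(c₁ λ t))^{1/λ}, (2 c₂/c₁)^{1/(1+λ)} }. -/
/-- ODE comparison lemma: if `f' + c₁ f^{1+λ} ≤ c₂` on `[0, T]`, then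
`f t ≤ max ((2/(c₁ λ t))^{1/λ}) ((2c₂/c₁)^{1/(1+λ)})` for `t ∈ (0, T]`. -/
theorem ode_comparison
    (lam c₁ c₂ T : ℝ) (hlam : 0 < lam) (hc₁ : 0 < c₁) (hc₂ : 0 < c₂) (hT : 0 < T)
    (f f' : ℝ → ℝ)
    (hf_nonneg : ∀ t ∈ Set.Icc (0 : ℝ) T, 0 ≤ f t)
    (hf_deriv : ∀ t ∈ Set.Icc (0 : ℝ) T, HasDerivWithinAt f (f' t) (Set.Icc (0 : ℝ) T) t)
    (hf_ineq : ∀ t ∈ Set.Icc (0 : ℝ) T, f' t + c₁ * (f t) ^ (1 + lam) ≤ c₂) :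
    ∀ t ∈ Set.Ioc (0 : ℝ) T,
      f t ≤ max ((2 / (c₁ * lam * t)) ^ (1 / lam)) ((2 * c₂ / c₁) ^ (1 / (1 + lam))) := by
  intro t₀ ht₀
  obtain ⟨ht₀0, ht₀T⟩ := ht₀
  set M := max ((2 / (c₁ * lam * t₀)) ^ (1 / lam)) ((2 * c₂ / c₁) ^ (1 / (1 + lam))) with hMdef
  by_contra hcon
  push_neg at hcon
  have h1lam : (0:ℝ) < 1 + lam := by linarith
  have hMpos : 0 < M := lt_of_lt_of_le (Real.rpow_pos_of_pos (by positivity) _) (le_max_right _ _)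
  have hsub : Set.Icc (0:ℝ) t₀ ⊆ Set.Icc (0:ℝ) T := Set.Icc_subset_Icc le_rfl ht₀T
  -- `c₁ M^{1+λ} ≥ 2 c₂`
  have hM2 : 2 * c₂ ≤ c₁ * M ^ (1 + lam) := by
    have h1 : ((2 * c₂ / c₁) ^ (1 / (1 + lam))) ^ (1 + lam) ≤ M ^ (1 + lam) :=
      Real.rpow_le_rpow (Real.rpow_nonneg (by positivity) _) (le_max_right _ _) h1lam.le
    rw [one_div, Real.rpow_inv_rpow (by positivity) h1lam.ne'] at h1
    rw [← div_le_iff₀' hc₁]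
    exact h1
  have key : ∀ s ∈ Set.Icc (0:ℝ) T, M ≤ f s → 2 * c₂ ≤ c₁ * f s ^ (1 + lam) := by
    intro s hs hfs
    refine le_trans hM2 ?_
    have := Real.rpow_le_rpow hMpos.le hfs h1lam.le
    nlinarith
  have hcont : ContinuousOn f (Set.Icc (0:ℝ) T) :=
    fun s hs => (hf_deriv s hs).continuousWithinAt
  -- Claim: `f > M` on all of `[0, t₀]`.
  have claim : ∀ s ∈ Set.Icc (0:ℝ) t₀, M < f s := by
    by_contra hcl
    push_neg at hcl
    obtain ⟨s₀, hs₀, hfs₀⟩ := hcl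
    set S := Set.Icc s₀ t₀ ∩ f ⁻¹' Set.Iic M with hSdef
    set s₁ := sSup S with hs₁def
    have hSne : S.Nonempty := ⟨s₀, ⟨le_rfl, hs₀.2⟩, hfs₀⟩
    have hSbdd : BddAbove S := ⟨t₀, fun x hx => hx.1.2⟩
    have hSclosed : IsClosed S :=
      ContinuousOn.preimage_isClosed_of_isClosed
        (hcont.mono (Set.Icc_subset_Icc hs₀.1 ht₀T)) isClosed_Icc isClosed_Iic
    have hs₁S : s₁ ∈ S := hSclosed.csSup_mem hSne hSbdd
    have h0s₁ : 0 ≤ s₁ := hs₀.1.trans hs₁S.1.1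
    have hs₁t₀ : s₁ ≤ t₀ := hs₁S.1.2
    have hfs₁ : f s₁ ≤ M := hs₁S.2
    have hs₁lt : s₁ < t₀ :=
      lt_of_le_of_ne hs₁t₀ (fun h => absurd (h ▸ hfs₁) (not_le.mpr hcon))
    -- on `(s₁, t₀)`, `f > M`
    have hgt : ∀ s ∈ Set.Ioo s₁ t₀, M < f s := by
      intro s hs
      by_contra hle
      push_neg at hle
      have : s ∈ S := ⟨⟨hs₁S.1.1.trans hs.1.le, hs.2.le⟩, hle⟩
      exact absurd (le_csSup hSbdd this) (not_le.mpr hs.1)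
    -- f is strictly antitone on [s₁, t₀]
    have hanti : StrictAntiOn f (Set.Icc s₁ t₀) := by
      apply strictAntiOn_of_hasDerivWithinAt_neg (f' := f') (convex_Icc _ _)
        (hcont.mono (Set.Icc_subset_Icc h0s₁ ht₀T))
      · intro x hx
        rw [interior_Icc] at hx
        have hxT : x ∈ Set.Icc (0:ℝ) T := ⟨h0s₁.trans hx.1.le, hx.2.le.trans ht₀T⟩
        refine (hf_deriv x hxT).mono ?_
        rw [interior_Icc]
        exact fun y hy => ⟨h0s₁.trans hy.1.le, hy.2.le.trans ht₀T⟩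
      · intro x hx
        rw [interior_Icc] at hx
        have hxT : x ∈ Set.Icc (0:ℝ) T := ⟨h0s₁.trans hx.1.le, hx.2.le.trans ht₀T⟩
        have h2 := key x hxT (hgt x hx).le
        have h3 := hf_ineq x hxT
        linarith
    have := hanti (Set.left_mem_Icc.mpr hs₁t₀) (Set.right_mem_Icc.mpr hs₁t₀) hs₁lt
    exact absurd (this.le.trans hfs₁) (not_le.mpr hcon)
  -- Now `f > M > 0` on `[0, t₀]`; consider `g s = f s ^ (-λ) - (c₁ λ / 2) s`.
  have hfpos : ∀ s ∈ Set.Icc (0:ℝ) t₀, 0 < f s := fun s hs => lt_trans hMpos (claim s hs)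
  set g : ℝ → ℝ := fun s => f s ^ (-lam) - c₁ * lam / 2 * s with hgdef
  have hmono : MonotoneOn g (Set.Icc (0:ℝ) t₀) := by
    apply monotoneOn_of_hasDerivWithinAt_nonneg
      (f' := fun s => f' s * (-lam) * f s ^ (-lam - 1) - c₁ * lam / 2) (convex_Icc _ _)
    · exact ((hcont.mono hsub).rpow_const (fun x hx => Or.inl (hfpos x hx).ne')).sub
        (continuousOn_const.mul continuousOn_id)
    · intro x hx
      rw [interior_Icc] at hx
      have hxT : x ∈ Set.Icc (0:ℝ) T := ⟨hx.1.le, hx.2.le.trans ht₀T⟩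
      have hd : HasDerivWithinAt f (f' x) (interior (Set.Icc (0:ℝ) t₀)) x := by
        refine (hf_deriv x hxT).mono ?_
        rw [interior_Icc]
        exact fun y hy => ⟨hy.1.le, hy.2.le.trans ht₀T⟩
      have h1 : HasDerivWithinAt (fun y => f y ^ (-lam))
          (f' x * (-lam) * f x ^ (-lam - 1)) (interior (Set.Icc (0:ℝ) t₀)) x :=
        hd.rpow_const (Or.inl (hfpos x ⟨hx.1.le, hx.2.le⟩).ne')
      have h2 : HasDerivWithinAt (fun y => c₁ * lam / 2 * y) (c₁ * lam / 2)
          (interior (Set.Icc (0:ℝ) t₀)) x := by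
        simpa using (hasDerivWithinAt_id x (interior (Set.Icc (0:ℝ) t₀))).const_mul (c₁ * lam / 2)
      exact h1.sub h2
    · intro x hx
      rw [interior_Icc] at hx
      have hxI : x ∈ Set.Icc (0:ℝ) t₀ := ⟨hx.1.le, hx.2.le⟩
      have hxT : x ∈ Set.Icc (0:ℝ) T := ⟨hx.1.le, hx.2.le.trans ht₀T⟩
      have hfx := hfpos x hxI
      have hpq : f x ^ (1 + lam) * f x ^ (-lam - 1) = 1 := by
        rw [← Real.rpow_add hfx, show 1 + lam + (-lam - 1) = 0 by ring, Real.rpow_zero]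
      have hq : 0 < f x ^ (-lam - 1) := Real.rpow_pos_of_pos hfx _
      have h2 := key x hxT (claim x hxI).le
      have h3 := hf_ineq x hxT
      have h4 : f' x ≤ -(c₁ * f x ^ (1 + lam)) / 2 := by linarith
      have h5 : f' x * f x ^ (-lam - 1) ≤ -(c₁ * f x ^ (1 + lam)) / 2 * f x ^ (-lam - 1) :=
        mul_le_mul_of_nonneg_right h4 hq.le
      have h6 : f' x * f x ^ (-lam - 1) ≤ -(c₁ / 2) := by nlinarith
      nlinarith [mul_le_mul_of_nonneg_left h6 hlam.le]
  have hg0 : g 0 ≤ g t₀ :=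
    hmono (Set.left_mem_Icc.mpr ht₀0.le) (Set.right_mem_Icc.mpr ht₀0.le) ht₀0.le
  have hf0pos : 0 < f 0 ^ (-lam) :=
    Real.rpow_pos_of_pos (hfpos 0 (Set.left_mem_Icc.mpr ht₀0.le)) _
  have hkey : c₁ * lam * t₀ / 2 ≤ f t₀ ^ (-lam) := by
    simp only [hgdef, mul_zero, sub_zero] at hg0
    linarith
  -- conclude `f t₀ ≤ (2/(c₁ λ t₀))^{1/λ}`, contradiction
  have hft₀ := hfpos t₀ (Set.right_mem_Icc.mpr ht₀0.le)
  have hA : 0 < c₁ * lam * t₀ / 2 := by positivity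
  rw [Real.rpow_neg hft₀.le] at hkey
  have hfl : f t₀ ^ lam ≤ 2 / (c₁ * lam * t₀) := by
    have h7 : 0 < f t₀ ^ lam := Real.rpow_pos_of_pos hft₀ _
    have h8 := inv_anti₀ hA hkey
    rw [inv_inv] at h8
    calc f t₀ ^ lam ≤ (c₁ * lam * t₀ / 2)⁻¹ := h8
      _ = 2 / (c₁ * lam * t₀) := by field_simp
  have hfin : f t₀ ≤ (2 / (c₁ * lam * t₀)) ^ (1 / lam) := by
    have h9 := Real.rpow_le_rpow (Real.rpow_pos_of_pos hft₀ lam).le hfl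
      (by positivity : (0:ℝ) ≤ 1/lam)
    rw [one_div] at h9 ⊢
    rwa [Real.rpow_rpow_inv hft₀.le hlam.ne'] at h9
  exact absurd (hfin.trans (le_max_left _ _)) (not_le.mpr hcon)
end

section
/- Let λ, c₁, c₂ ∈ (0, ∞), T ∈ (0, ∞), and set K := (2 c₂/c₁)^{1/(1+λ)}. Suppose f : [0, T] → [0, ∞) is differentiable on [0, T] and satisfies f′(t) + c₁·f(t)^{1+λ} ≤ c₂ for every t ∈ [0, T]. If f(s) ≤ K for some s ∈ [0, T], then f(t) ≤ K for every t ∈ [s, T]. -/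
/-- Forward invariance: if `f' + c₁ f^{1+λ} ≤ c₂` on `[0, T]` and `f s ≤ (2c₂/c₁)^{1/(1+λ)}`
for some `s ∈ [0, T]`, then `f t ≤ (2c₂/c₁)^{1/(1+λ)}` for all `t ∈ [s, T]`. -/
theorem ode_forward_invariance
    (lam c₁ c₂ T : ℝ) (hlam : 0 < lam) (hc₁ : 0 < c₁) (hc₂ : 0 < c₂) (hT : 0 < T)
    (K : ℝ) (hK : K = (2 * c₂ / c₁) ^ (1 / (1 + lam)))
    (f f' : ℝ → ℝ)
    (hf_nonneg : ∀ t ∈ Set.Icc (0 : ℝ) T, 0 ≤ f t)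
    (hf_deriv : ∀ t ∈ Set.Icc (0 : ℝ) T, HasDerivWithinAt f (f' t) (Set.Icc (0 : ℝ) T) t)
    (hf_ineq : ∀ t ∈ Set.Icc (0 : ℝ) T, f' t + c₁ * (f t) ^ (1 + lam) ≤ c₂)
    (s : ℝ) (hs : s ∈ Set.Icc (0 : ℝ) T) (hfs : f s ≤ K) :
    ∀ t ∈ Set.Icc s T, f t ≤ K := by
  have h1lam : 0 < 1 + lam := by linarith
  have hbase : (0 : ℝ) < 2 * c₂ / c₁ := by positivity
  have hKpow : K ^ (1 + lam) = 2 * c₂ / c₁ := by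
    rw [hK, ← Real.rpow_mul hbase.le, one_div, inv_mul_cancel₀ h1lam.ne', Real.rpow_one]
  have hsub : Set.Icc s T ⊆ Set.Icc (0 : ℝ) T := Set.Icc_subset_Icc hs.1 le_rfl
  have hcont : ContinuousOn f (Set.Icc s T) := fun x hx =>
    ((hf_deriv x (hsub hx)).continuousWithinAt).mono hsub
  have hf' : ∀ x ∈ Set.Ico s T, HasDerivWithinAt f (f' x) (Set.Ici x) x := by
    intro x hx
    have hx' : x ∈ Set.Icc (0 : ℝ) T := ⟨hs.1.trans hx.1, hx.2.le⟩
    have h1 : HasDerivWithinAt f (f' x) (Set.Icc x T) x :=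
      (hf_deriv x hx').mono (Set.Icc_subset_Icc hx'.1 le_rfl)
    have hmem : Set.Icc x T ∈ nhdsWithin x (Set.Ici x) := by
      rw [← Set.Ici_inter_Iic]
      exact inter_mem_nhdsWithin _ (Iic_mem_nhds hx.2)
    exact h1.mono_of_mem_nhdsWithin hmem
  have bound : ∀ x ∈ Set.Ico s T, f x = K → f' x < (0 : ℝ) := by
    intro x hx hfx
    have hx' : x ∈ Set.Icc (0 : ℝ) T := ⟨hs.1.trans hx.1, hx.2.le⟩
    have := hf_ineq x hx'
    rw [hfx, hKpow] at this
    have h2 : c₁ * (2 * c₂ / c₁) = 2 * c₂ := by field_simp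
    nlinarith
  have := image_le_of_deriv_right_lt_deriv_boundary hcont hf' hfs
    (fun x => hasDerivAt_const x K) bound
  intro t ht
  exact this ht
end

section
/- Let λ, c₁ ∈ (0, ∞) and t ∈ (0, ∞). Suppose f : [0, t] → [0, ∞) is differentiable on [0, t] and satisfies f′(s) ≤ −(c₁/2)·f(s)^{1+λ} for every s ∈ [0, t]. Then f(t) ≤ (2/(c₁ λ t))^{1/λ}. -/
/-- Decay step: if `f' ≤ -(c₁/2) f^{1+λ}` on `[0, t]`, then `f t ≤ (2/(c₁ λ t))^{1/λ}`. -/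
theorem ode_decay
    (lam c₁ t : ℝ) (hlam : 0 < lam) (hc₁ : 0 < c₁) (ht : 0 < t)
    (f f' : ℝ → ℝ)
    (hf_nonneg : ∀ s ∈ Set.Icc (0 : ℝ) t, 0 ≤ f s)
    (hf_deriv : ∀ s ∈ Set.Icc (0 : ℝ) t, HasDerivWithinAt f (f' s) (Set.Icc (0 : ℝ) t) s)
    (hf_ineq : ∀ s ∈ Set.Icc (0 : ℝ) t, f' s ≤ -(c₁ / 2) * (f s) ^ (1 + lam)) :
    f t ≤ (2 / (c₁ * lam * t)) ^ (1 / lam) := by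
  by_contra hcon
  push_neg at hcon
  have hApos : 0 < c₁ * lam * t := by positivity
  have hbpos : (0:ℝ) < (2 / (c₁ * lam * t)) ^ (1 / lam) :=
    Real.rpow_pos_of_pos (by positivity) _
  have hft : 0 < f t := hbpos.trans hcon
  have htmem : t ∈ Set.Icc (0:ℝ) t := Set.right_mem_Icc.2 ht.le
  have h0mem : (0:ℝ) ∈ Set.Icc (0:ℝ) t := Set.left_mem_Icc.2 ht.le
  have hfc : ContinuousOn f (Set.Icc 0 t) := fun s hs =>
    (hf_deriv s hs).continuousWithinAt
  -- the derivative is nonpositive, so f is antitone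
  have hderivAt : ∀ x ∈ Set.Ioo (0:ℝ) t, HasDerivAt f (f' x) x := by
    intro x hx
    exact (hf_deriv x (Set.Ioo_subset_Icc_self hx)).hasDerivAt
      (Icc_mem_nhds hx.1 hx.2)
  have hanti : AntitoneOn f (Set.Icc 0 t) := by
    apply antitoneOn_of_deriv_nonpos (convex_Icc 0 t) hfc
    · intro x hx
      rw [interior_Icc] at hx
      exact ((hderivAt x hx).differentiableAt).differentiableWithinAt
    · intro x hx
      rw [interior_Icc] at hx
      rw [(hderivAt x hx).deriv]
      have h1 := hf_ineq x (Set.Ioo_subset_Icc_self hx)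
      have h2 : (0:ℝ) ≤ (f x) ^ (1 + lam) :=
        Real.rpow_nonneg (hf_nonneg x (Set.Ioo_subset_Icc_self hx)) _
      nlinarith
  have hfpos : ∀ s ∈ Set.Icc (0:ℝ) t, 0 < f s := fun s hs =>
    hft.trans_le (hanti hs htmem hs.2)
  -- the auxiliary function g = f ^ (-lam)
  set g : ℝ → ℝ := fun s => f s ^ (-lam) with hg
  have hg_deriv : ∀ s ∈ Set.Icc (0:ℝ) t,
      HasDerivWithinAt g (f' s * (-lam) * f s ^ (-lam - 1)) (Set.Icc 0 t) s := by
    intro s hs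
    exact (hf_deriv s hs).rpow_const (Or.inl (hfpos s hs).ne')
  have hgc : ContinuousOn g (Set.Icc 0 t) := fun s hs =>
    (hg_deriv s hs).continuousWithinAt
  have hgderivAt : ∀ x ∈ Set.Ioo (0:ℝ) t,
      HasDerivAt g (f' x * (-lam) * f x ^ (-lam - 1)) x := by
    intro x hx
    exact (hg_deriv x (Set.Ioo_subset_Icc_self hx)).hasDerivAt
      (Icc_mem_nhds hx.1 hx.2)
  have hgd : DifferentiableOn ℝ g (interior (Set.Icc 0 t)) := by
    intro x hx
    rw [interior_Icc] at hx
    exact ((hgderivAt x hx).differentiableAt).differentiableWithinAt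
  have hbound : ∀ x ∈ interior (Set.Icc (0:ℝ) t), lam * c₁ / 2 ≤ deriv g x := by
    intro x hx
    rw [interior_Icc] at hx
    rw [(hgderivAt x hx).deriv]
    have hxmem := Set.Ioo_subset_Icc_self hx
    have hfx := hfpos x hxmem
    have h1 := hf_ineq x hxmem
    have h2 : (0:ℝ) < f x ^ (-lam - 1) := Real.rpow_pos_of_pos hfx _
    have h3 : f x ^ (-lam - 1) * f x ^ (1 + lam) = 1 := by
      rw [← Real.rpow_add hfx, show -lam - 1 + (1 + lam) = 0 by ring, Real.rpow_zero]
    have h4 : f' x * (-lam) * f x ^ (-lam - 1)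
        ≥ (-(c₁/2) * f x ^ (1 + lam)) * (-lam) * f x ^ (-lam - 1) := by
      have h := mul_le_mul_of_nonneg_right h1 h2.le
      nlinarith [mul_le_mul_of_nonneg_left h hlam.le]
    calc lam * c₁ / 2 = (-(c₁/2) * f x ^ (1 + lam)) * (-lam) * f x ^ (-lam - 1) := by
          rw [show (-(c₁/2) * f x ^ (1 + lam)) * (-lam) * f x ^ (-lam - 1)
              = (lam * c₁ / 2) * (f x ^ (-lam - 1) * f x ^ (1 + lam)) by ring, h3, mul_one]
      _ ≤ f' x * (-lam) * f x ^ (-lam - 1) := h4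
  have key := (convex_Icc (0:ℝ) t).mul_sub_le_image_sub_of_le_deriv hgc hgd hbound
    0 h0mem t htmem ht.le
  -- key : lam * c₁ / 2 * (t - 0) ≤ g t - g 0
  have hg0 : 0 ≤ g 0 := Real.rpow_nonneg (hf_nonneg 0 h0mem) _
  have hgt : c₁ * lam * t / 2 ≤ g t := by nlinarith
  -- derive the contradiction
  have hpow : 2 / (c₁ * lam * t) < f t ^ lam := by
    have := Real.rpow_lt_rpow hbpos.le hcon hlam
    rwa [one_div, Real.rpow_inv_rpow (by positivity) hlam.ne'] at this
  have h5 : g t = (f t ^ lam)⁻¹ := Real.rpow_neg hft.le lam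
  have hftlam_pos : 0 < f t ^ lam := Real.rpow_pos_of_pos hft _
  have h6 : (f t ^ lam)⁻¹ < c₁ * lam * t / 2 := by
    have : (f t ^ lam)⁻¹ < (2 / (c₁ * lam * t))⁻¹ :=
      (inv_lt_inv₀ hftlam_pos (by positivity)).2 hpow
    calc (f t ^ lam)⁻¹ < (2 / (c₁ * lam * t))⁻¹ := this
      _ = c₁ * lam * t / 2 := by field_simp
  rw [h5] at hgt
  linarith
end

section
/- Let μ ∈ (0, ∞) and let p ∈ [2, ∞) be a real number. For every y ∈ ℂ with y ≠ 0 and every v, w ∈ ℂ, one has Re[ (i + μ)·( (p/2)·|y|^{p−2}·(|v|² + |w|²) + ((p−2)/2)·|y|^{p−4}·(conj y)²·(v² + w²) ) ] ≥ ( μp/2 − ((p−2)/2)·√(1+μ²) )·|y|^{p−2}·(|v|² + |w|²). -/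
/-!
Split the bracket as `a + b` with `a = (p/2)|y|^{p-2}(|v|² + |w|²)` real. Then
`Re[(i+μ)a] = μa` exactly, while `Re[(i+μ)b] ≥ -|i+μ||b| = -√(1+μ²)|b|`, and
`|b| ≤ ((p-2)/2)|y|^{p-2}(|v|² + |w|²)` by the triangle inequality for `v² + w²`
and `|y|^{p-4}|y|² ≤ |y|^{p-2}` (an equality for `y ≠ 0`; at `y = 0` it covers the rpow conventions).
-/

open Complex

namespace Complex

theorem norm_I_add_ofReal (x : ℝ) : ‖I + (x : ℂ)‖ = √(1 + x ^ 2) := by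
  rw [add_comm, ← mul_one I, mul_comm, ← ofReal_one, norm_add_mul_I, one_pow, add_comm]

theorem le_re_mul_ofReal_add (ζ b : ℂ) (a : ℝ) :
    ζ.re * a - ‖ζ‖ * ‖b‖ ≤ (ζ * (a + b)).re := by
  have h := re_le_norm (-(ζ * b))
  rw [neg_re, norm_neg, norm_mul] at h
  rw [mul_add, add_re, re_mul_ofReal]
  linarith

theorem norm_sq_add_sq_le (v w : ℂ) : ‖v ^ 2 + w ^ 2‖ ≤ ‖v‖ ^ 2 + ‖w‖ ^ 2 :=
  (norm_add_le _ _).trans_eq (by rw [norm_pow, norm_pow])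

theorem norm_ofReal_mul_rpow_mul_conj_sq_mul_le {c : ℝ} (hc : 0 ≤ c) (a : ℝ) (y v w : ℂ) :
    ‖(c : ℂ) * ((‖y‖ ^ a : ℝ) : ℂ) * (starRingEnd ℂ y) ^ 2 * (v ^ 2 + w ^ 2)‖
      ≤ c * ‖y‖ ^ (a + 2) * (‖v‖ ^ 2 + ‖w‖ ^ 2) := by
  have hy : ‖y‖ ^ a * ‖y‖ ^ 2 ≤ ‖y‖ ^ (a + 2) := by
    exact_mod_cast Real.le_rpow_add (norm_nonneg y) a 2
  rw [norm_mul, norm_mul, norm_mul, norm_pow, norm_conj, norm_real, norm_real,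
    Real.norm_of_nonneg hc, Real.norm_of_nonneg (by positivity), mul_assoc c]
  gcongr
  exact norm_sq_add_sq_le v w

end Complex

theorem pointwise_coercivity_general
    (μ p : ℝ) (hp : 2 ≤ p)
    (y v w : ℂ) :
    ((Complex.I + (μ : ℂ)) *
        (((p / 2 : ℝ) : ℂ) * ((‖y‖ ^ (p - 2) : ℝ) : ℂ) *
            (((‖v‖ ^ 2 + ‖w‖ ^ 2 : ℝ)) : ℂ)
          + (((p - 2) / 2 : ℝ) : ℂ) * ((‖y‖ ^ (p - 4) : ℝ) : ℂ) *
            ((starRingEnd ℂ) y) ^ 2 * (v ^ 2 + w ^ 2))).re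
      ≥ (μ * p / 2 - (p - 2) / 2 * Real.sqrt (1 + μ ^ 2)) *
          (‖y‖ ^ (p - 2)) * (‖v‖ ^ 2 + ‖w‖ ^ 2) := by
  set S := ‖v‖ ^ 2 + ‖w‖ ^ 2
  have hb := norm_ofReal_mul_rpow_mul_conj_sq_mul_le (c := (p - 2) / 2) (by linarith) (p - 4) y v w
  rw [show p - 4 + 2 = p - 2 by ring] at hb
  generalize ((((p - 2) / 2 : ℝ) : ℂ) * ((‖y‖ ^ (p - 4) : ℝ) : ℂ) *
    (starRingEnd ℂ y) ^ 2 * (v ^ 2 + w ^ 2)) = b at hb ⊢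
  have h := le_re_mul_ofReal_add (I + μ) b (p / 2 * ‖y‖ ^ (p - 2) * S)
  rw [norm_I_add_ofReal, add_re, I_re, ofReal_re, zero_add, ofReal_mul, ofReal_mul] at h
  linarith [mul_le_mul_of_nonneg_left hb (Real.sqrt_nonneg (1 + μ ^ 2))]

/-- Pointwise coercivity estimate for the operator `(i+μ)Δ` in the a priori `L^p` estimate. -/
theorem pointwise_coercivity
    (μ p : ℝ) (hμ : 0 < μ) (hp : 2 ≤ p)
    (y v w : ℂ) (hy : y ≠ 0) :
    ((Complex.I + (μ : ℂ)) *
        (((p / 2 : ℝ) : ℂ) * ((‖y‖ ^ (p - 2) : ℝ) : ℂ) *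
            (((‖v‖ ^ 2 + ‖w‖ ^ 2 : ℝ)) : ℂ)
          + (((p - 2) / 2 : ℝ) : ℂ) * ((‖y‖ ^ (p - 4) : ℝ) : ℂ) *
            ((starRingEnd ℂ) y) ^ 2 * (v ^ 2 + w ^ 2))).re
      ≥ (μ * p / 2 - (p - 2) / 2 * Real.sqrt (1 + μ ^ 2)) *
          (‖y‖ ^ (p - 2)) * (‖v‖ ^ 2 + ‖w‖ ^ 2) :=
  pointwise_coercivity_general μ p hp y v w
end

section
/- Let (X, 𝒜, μ) be a measure space with μ(X) < ∞, let p ∈ [2, ∞) be a real number, let a < b be reals, and let Y : [a, b] → (X → ℂ) be such that Y_a is a bounded measurable function, each Y_t is measurable, and there exist C ∈ [0, ∞) and θ ∈ (1/2, 1] with sup_{x ∈ X} |Y_t(x) − Y_s(x)| ≤ C·|t − s|^θ for all s, t ∈ [a, b]. Then for every ε > 0 there exists δ > 0 such that for every partition a = t_0 < t_1 < ⋯ < t_n = b with max_i (t_{i+1} − t_i) < δ, one has | Σ_{i=0}^{n−1} Re ∫_X Y_{t_{i+1}}(x)·( conj(Y_{t_{i+1}}(x))·|Y_{t_{i+1}}(x)|^{p−2}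 − conj(Y_{t_i}(x))·|Y_{t_i}(x)|^{p−2} ) dμ(x) − ((p−1)/p)·( ∫_X |Y_b(x)|^p dμ(x) − ∫_X |Y_a(x)|^p dμ(x) ) | < ε. -/
/-!
Write `J y = ‖y‖ ^ (p - 2) • y`, so that `conj (J y) = conj y * ‖y‖ ^ (p - 2)` and
`Re (z * conj (J z - J y)) = ⟪J z - J y, z⟫`. Since `⟪J y, y⟫ = ‖y‖ ^ p` and `p • J` is the gradient
of `‖·‖ ^ p`, each summand equals `((p - 1) / p) (‖z‖ ^ p - ‖y‖ ^ p)` plus `1 / p` times the first-order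
Taylor remainder of `‖·‖ ^ p` at `y`. As `J` is Lipschitz on bounded sets, that remainder is
`O(‖z - y‖ ^ 2) = O(Δ ^ (2θ))`, so the errors add up to `O(δ ^ (2θ - 1) (b - a))`, which vanishes as
`δ → 0` because `θ > 1/2`, while the main terms telescope.
-/

open MeasureTheory Complex
open scoped ComplexConjugate

lemma mul_rpow_sub_rpow_le {q s r : ℝ} (hq : 0 ≤ q) (hs : 0 ≤ s) (hsr : s ≤ r) :
    r * (r ^ q - s ^ q) ≤ (q + 1) * r ^ q * (r - s) := by
  obtain rfl | hr := (hs.trans hsr).eq_or_lt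
  · obtain rfl : s = 0 := le_antisymm hsr hs
    simp
  set u := s / r
  have hu0 : 0 ≤ u := div_nonneg hs hr.le
  have hu1 : u ≤ 1 := div_le_one_of_le₀ hsr hr.le
  have hsu : s = u * r := (div_mul_cancel₀ s hr.ne').symm
  -- Bernoulli's inequality for the exponent `q + 1`, then `u ^ (q + 1) ≤ u ^ q` as `u ≤ 1`
  have hbernoulli : (q + 1) * u - q ≤ u ^ q := by
    have h := one_add_mul_self_le_rpow_one_add (s := u - 1) (by linarith) (p := q + 1) (by linarith)
    rw [add_sub_cancel] at h
    linarith [Real.rpow_le_rpow_of_exponent_ge' hu0 hu1 hq (by linarith : q ≤ q + 1)]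
  have hrq : 0 ≤ r ^ q := Real.rpow_nonneg hr.le q
  rw [hsu, Real.mul_rpow hu0 hr.le]
  nlinarith [mul_nonneg (mul_nonneg hrq hr.le) (sub_nonneg.2 hbernoulli)]

noncomputable def dualityMap {E : Type*} [NormedAddCommGroup E] [NormedSpace ℝ E] (p : ℝ)
    (x : E) : E :=
  ‖x‖ ^ (p - 2) • x

lemma norm_dualityMap_sub_le {E : Type*} [NormedAddCommGroup E] [NormedSpace ℝ E] {p R : ℝ}
    (hp : 2 ≤ p) {y w : E} (hy : ‖y‖ ≤ R) (hw : ‖w‖ ≤ R) :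
    ‖dualityMap p w - dualityMap p y‖ ≤ p * R ^ (p - 2) * ‖w - y‖ := by
  wlog hyw : ‖y‖ ≤ ‖w‖ generalizing y w
  · rw [norm_sub_rev, norm_sub_rev w]
    exact this hw hy (le_of_not_ge hyw)
  have hq : 0 ≤ p - 2 := by linarith
  have hRq : 0 ≤ R ^ (p - 2) := Real.rpow_nonneg ((norm_nonneg y).trans hy) _
  have hdiff : 0 ≤ ‖w‖ ^ (p - 2) - ‖y‖ ^ (p - 2) :=
    sub_nonneg.2 (Real.rpow_le_rpow (norm_nonneg _) hyw hq)
  have hsplit : dualityMap p w - dualityMap p y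
      = (‖w‖ ^ (p - 2) - ‖y‖ ^ (p - 2)) • w + ‖y‖ ^ (p - 2) • (w - y) := by
    simp only [dualityMap, sub_smul, smul_sub]
    abel
  calc ‖dualityMap p w - dualityMap p y‖
      ≤ ‖w‖ * (‖w‖ ^ (p - 2) - ‖y‖ ^ (p - 2)) + ‖y‖ ^ (p - 2) * ‖w - y‖ := by
        rw [hsplit]
        refine (norm_add_le _ _).trans_eq ?_
        rw [norm_smul, norm_smul, Real.norm_of_nonneg hdiff,
          Real.norm_of_nonneg (Real.rpow_nonneg (norm_nonneg _) _), mul_comm]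
    _ ≤ (p - 2 + 1) * R ^ (p - 2) * ‖w - y‖ + R ^ (p - 2) * ‖w - y‖ := by
        refine add_le_add ((mul_rpow_sub_rpow_le hq (norm_nonneg y) hyw).trans ?_) (by gcongr)
        gcongr
        exact norm_sub_norm_le w y
    _ = p * R ^ (p - 2) * ‖w - y‖ := by ring

section InnerProductSpace

variable {E : Type*} [NormedAddCommGroup E] [InnerProductSpace ℝ E] {p R : ℝ}

lemma hasFDerivAt_norm_rpow_dualityMap (hp : 1 < p) (x : E) :
    HasFDerivAt (fun x : E ↦ ‖x‖ ^ p) (p • innerSL ℝ (dualityMap p x)) x := by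
  convert hasFDerivAt_norm_rpow x hp using 1
  rw [dualityMap, map_smul, smul_smul]

lemma inner_dualityMap_self (hp : p ≠ 0) (x : E) : inner ℝ (dualityMap p x) x = ‖x‖ ^ p := by
  rw [dualityMap, real_inner_smul_left, real_inner_self_eq_norm_sq, ← Real.rpow_natCast,
    ← Real.rpow_add' (norm_nonneg x) (by simpa using hp)]
  norm_num

lemma abs_norm_rpow_sub_sub_inner_le (hp : 2 ≤ p) {y z : E} (hy : ‖y‖ ≤ R) (hz : ‖z‖ ≤ R) :
    |‖z‖ ^ p - ‖y‖ ^ p - p * inner ℝ (dualityMap p y) (z - y)|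
      ≤ p * (p * R ^ (p - 2)) * ‖z - y‖ ^ 2 := by
  have hseg : segment ℝ y z ⊆ Metric.closedBall 0 R :=
    (convex_closedBall 0 R).segment_subset (mem_closedBall_zero_iff.2 hy)
      (mem_closedBall_zero_iff.2 hz)
  have hderiv : ∀ x ∈ segment ℝ y z, HasFDerivWithinAt
      (fun x : E ↦ ‖x‖ ^ p - p * inner ℝ (dualityMap p y) x)
      (p • innerSL ℝ (dualityMap p x) - p • innerSL ℝ (dualityMap p y)) (segment ℝ y z) x :=
    fun x _ ↦ ((hasFDerivAt_norm_rpow_dualityMap (by linarith) x).sub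
      ((innerSL ℝ (dualityMap p y)).hasFDerivAt.const_smul p)).hasFDerivWithinAt
  have hbound : ∀ x ∈ segment ℝ y z,
      ‖p • innerSL ℝ (dualityMap p x) - p • innerSL ℝ (dualityMap p y)‖
        ≤ p * (p * R ^ (p - 2)) * ‖z - y‖ := by
    intro x hx
    rw [← smul_sub, ← map_sub, norm_smul, innerSL_apply_norm, Real.norm_of_nonneg (by linarith),
      mul_assoc]
    gcongr
    calc ‖dualityMap p x - dualityMap p y‖ ≤ p * R ^ (p - 2) * ‖x - y‖ :=
          norm_dualityMap_sub_le hp hy (mem_closedBall_zero_iff.1 (hseg hx))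
      _ ≤ p * R ^ (p - 2) * ‖z - y‖ := by
          have : 0 ≤ R := (norm_nonneg y).trans hy
          gcongr
          exact norm_sub_le_of_mem_segment hx
  have hmvt := (convex_segment y z).norm_image_sub_le_of_norm_hasFDerivWithin_le hderiv hbound
    (left_mem_segment ℝ y z) (right_mem_segment ℝ y z)
  rw [Real.norm_eq_abs] at hmvt
  convert hmvt using 1
  · rw [inner_sub_right]
    ring_nf
  · ring

lemma abs_inner_dualityMap_sub_sub_le (hp : 2 ≤ p) {y z : E} (hy : ‖y‖ ≤ R) (hz : ‖z‖ ≤ R) :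
    |inner ℝ (dualityMap p z - dualityMap p y) z - (p - 1) / p * (‖z‖ ^ p - ‖y‖ ^ p)|
      ≤ p * R ^ (p - 2) * ‖z - y‖ ^ 2 := by
  have hp0 : 0 < p := by linarith
  have htaylor : inner ℝ (dualityMap p z - dualityMap p y) z - (p - 1) / p * (‖z‖ ^ p - ‖y‖ ^ p)
      = (‖z‖ ^ p - ‖y‖ ^ p - p * inner ℝ (dualityMap p y) (z - y)) / p := by
    rw [inner_sub_left, inner_sub_right, inner_dualityMap_self hp0.ne',
      inner_dualityMap_self hp0.ne']
    field_simp
    ring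
  rw [htaylor, abs_div, abs_of_pos hp0, div_le_iff₀ hp0]
  linarith [abs_norm_rpow_sub_sub_inner_le hp hy hz]

end InnerProductSpace

lemma re_mul_sub_eq_inner_dualityMap_sub (p : ℝ) (y z : ℂ) :
    (z * (conj z * ((‖z‖ ^ (p - 2) : ℝ) : ℂ) - conj y * ((‖y‖ ^ (p - 2) : ℝ) : ℂ))).re
      = inner ℝ (dualityMap p z - dualityMap p y) z := by
  rw [Complex.inner, dualityMap, dualityMap, map_sub, Complex.real_smul, Complex.real_smul,
    map_mul, map_mul, Complex.conj_ofReal, Complex.conj_ofReal]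
  ring_nf

section Integral

variable {X : Type*} [MeasurableSpace X] {μ : Measure X} [IsFiniteMeasure μ]

lemma Continuous.integrable_comp_of_norm_le {F G : Type*} [NormedAddCommGroup F] [ProperSpace F]
    [NormedAddCommGroup G] {Φ : F → G} (hΦ : Continuous Φ) {v : X → F}
    (hv : AEStronglyMeasurable v μ) {R : ℝ} (hvR : ∀ x, ‖v x‖ ≤ R) :
    Integrable (fun x ↦ Φ (v x)) μ := by
  obtain ⟨C, hC⟩ := (isCompact_closedBall 0 R).exists_bound_of_continuousOn hΦ.continuousOn
  exact .of_bound (hΦ.comp_aestronglyMeasurable hv) C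
    (ae_of_all _ fun x ↦ hC _ (mem_closedBall_zero_iff.2 (hvR x)))

lemma abs_re_integral_mul_conj_sub_sub_le {p R D : ℝ} (hp : 2 ≤ p) {f g : X → ℂ}
    (hf : AEStronglyMeasurable f μ) (hg : AEStronglyMeasurable g μ)
    (hfR : ∀ x, ‖f x‖ ≤ R) (hgR : ∀ x, ‖g x‖ ≤ R) (hfg : ∀ x, ‖f x - g x‖ ≤ D) :
    |(∫ x, f x * (conj (f x) * ((‖f x‖ ^ (p - 2) : ℝ) : ℂ)
          - conj (g x) * ((‖g x‖ ^ (p - 2) : ℝ) : ℂ)) ∂μ).re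
        - (p - 1) / p * ((∫ x, ‖f x‖ ^ p ∂μ) - ∫ x, ‖g x‖ ^ p ∂μ)|
      ≤ p * R ^ (p - 2) * D ^ 2 * μ.real Set.univ := by
  set F : X → ℂ := fun x ↦ f x * (conj (f x) * ((‖f x‖ ^ (p - 2) : ℝ) : ℂ)
      - conj (g x) * ((‖g x‖ ^ (p - 2) : ℝ) : ℂ)) with hF_def
  have hF : Integrable F μ :=
    Continuous.integrable_comp_of_norm_le
      (Φ := fun w : ℂ × ℂ ↦ w.1 * (conj w.1 * ((‖w.1‖ ^ (p - 2) : ℝ) : ℂ)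
        - conj w.2 * ((‖w.2‖ ^ (p - 2) : ℝ) : ℂ)))
      (by fun_prop (disch := linarith)) (hf.prodMk hg)
      (fun x ↦ norm_prod_le_iff.2 ⟨hfR x, hgR x⟩)
  have hfp : Integrable (fun x ↦ ‖f x‖ ^ p) μ :=
    Continuous.integrable_comp_of_norm_le (Φ := fun w : ℂ ↦ ‖w‖ ^ p)
      (by fun_prop (disch := linarith)) hf hfR
  have hgp : Integrable (fun x ↦ ‖g x‖ ^ p) μ :=
    Continuous.integrable_comp_of_norm_le (Φ := fun w : ℂ ↦ ‖w‖ ^ p)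
      (by fun_prop (disch := linarith)) hg hgR
  have hFre : Integrable (fun x ↦ (F x).re) μ := hF.re
  have hpow : Integrable (fun x ↦ (p - 1) / p * (‖f x‖ ^ p - ‖g x‖ ^ p)) μ :=
    (hfp.sub hgp).const_mul _
  have hre : ∫ x, (F x).re ∂μ = (∫ x, F x ∂μ).re := integral_re hF
  rw [← hre, ← integral_sub hfp hgp, ← integral_const_mul, ← integral_sub hFre hpow,
    ← Real.norm_eq_abs]
  refine norm_integral_le_of_norm_le_const (ae_of_all _ fun x ↦ ?_)
  rw [Real.norm_eq_abs, hF_def, re_mul_sub_eq_inner_dualityMap_sub]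
  refine (abs_inner_dualityMap_sub_sub_le hp (hgR x) (hfR x)).trans ?_
  have : 0 ≤ R := (norm_nonneg _).trans (hfR x)
  gcongr
  exact hfg x

end Integral

lemma norm_le_add_mul_rpow_of_holder {E : Type*} [SeminormedAddCommGroup E] {Y : ℝ → E}
    {a b s M C θ : ℝ} (hC : 0 ≤ C) (hθ : 0 ≤ θ) (hs : s ∈ Set.Icc a b) (hYa : ‖Y a‖ ≤ M)
    (hYs : ‖Y s - Y a‖ ≤ C * |s - a| ^ θ) : ‖Y s‖ ≤ M + C * (b - a) ^ θ := by
  have hsa : |s - a| ^ θ ≤ (b - a) ^ θ := by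
    rw [abs_of_nonneg (sub_nonneg.2 hs.1)]
    gcongr
    exacts [sub_nonneg.2 hs.1, hs.2]
  calc ‖Y s‖ ≤ ‖Y a‖ + ‖Y s - Y a‖ := norm_le_norm_add_norm_sub' (Y s) (Y a)
    _ ≤ M + C * (b - a) ^ θ := add_le_add hYa (hYs.trans (by gcongr))

lemma mem_Icc_of_le_succ {t : ℕ → ℝ} {n : ℕ} (ht : ∀ i < n, t i ≤ t (i + 1)) {i : ℕ}
    (hi : i ≤ n) : t i ∈ Set.Icc (t 0) (t n) := by
  have hmono : MonotoneOn t (Set.Iic n) :=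
    monotoneOn_of_le_add_one Set.ordConnected_Iic fun j _ _ hj ↦ ht j hj
  exact ⟨hmono (Nat.zero_le n) hi (Nat.zero_le i), hmono hi (Set.mem_Iic.2 le_rfl) hi⟩

lemma abs_sum_sub_sub_le_of_mesh {t : ℕ → ℝ} {n : ℕ} {F : ℝ → ℝ} {S : ℕ → ℝ} {L γ δ : ℝ}
    (hL : 0 ≤ L) (hγ : 1 ≤ γ) (ht : ∀ i < n, t i ≤ t (i + 1))
    (hmesh : ∀ i < n, t (i + 1) - t i < δ)
    (hS : ∀ i < n, |S i - (F (t (i + 1)) - F (t i))| ≤ L * (t (i + 1) - t i) ^ γ) :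
    |∑ i ∈ Finset.range n, S i - (F (t n) - F (t 0))| ≤ L * (t n - t 0) * δ ^ (γ - 1) := by
  rw [← Finset.sum_range_sub (fun i ↦ F (t i)), ← Finset.sum_sub_distrib]
  calc |∑ i ∈ Finset.range n, (S i - (F (t (i + 1)) - F (t i)))|
      ≤ ∑ i ∈ Finset.range n, L * δ ^ (γ - 1) * (t (i + 1) - t i) := by
        refine (Finset.abs_sum_le_sum_abs _ _).trans (Finset.sum_le_sum fun i hi ↦ ?_)
        have hi := Finset.mem_range.1 hi
        have hΔ : 0 ≤ t (i + 1) - t i := sub_nonneg.2 (ht i hi)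
        calc |S i - (F (t (i + 1)) - F (t i))| ≤ L * (t (i + 1) - t i) ^ γ := hS i hi
          _ = L * ((t (i + 1) - t i) ^ (γ - 1) * (t (i + 1) - t i)) := by
              rw [← Real.rpow_add_one' hΔ (by linarith), sub_add_cancel]
          _ ≤ L * (δ ^ (γ - 1) * (t (i + 1) - t i)) := by
              gcongr
              exact (hmesh i hi).le
          _ = L * δ ^ (γ - 1) * (t (i + 1) - t i) := by ring
    _ = L * (t n - t 0) * δ ^ (γ - 1) := by
        rw [← Finset.mul_sum, Finset.sum_range_sub t]
        ring

lemma exists_pos_mul_rpow_lt (L : ℝ) {γ ε : ℝ} (hγ : 0 < γ) (hε : 0 < ε) :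
    ∃ δ > 0, L * δ ^ γ < ε := by
  have hlim : Filter.Tendsto (fun δ : ℝ ↦ L * δ ^ γ) (nhdsWithin 0 (Set.Ioi 0)) (nhds 0) := by
    have := ((Real.continuousAt_rpow_const 0 γ (Or.inr hγ.le)).const_mul L).tendsto
    rw [Real.zero_rpow hγ.ne', mul_zero] at this
    exact this.mono_left nhdsWithin_le_nhds
  exact ((hlim.eventually (gt_mem_nhds hε)).and self_mem_nhdsWithin).exists.imp
    fun δ h ↦ ⟨h.2, h.1⟩

theorem riemann_sum_S_convergence_general
    {X : Type*} [MeasurableSpace X] (μ : Measure X) [IsFiniteMeasure μ]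
    (p : ℝ) (hp : 2 ≤ p) (a b : ℝ) (hab : a < b)
    (Y : ℝ → X → ℂ)
    (hYa_bdd : ∃ M : ℝ, ∀ x : X, ‖Y a x‖ ≤ M)
    (hY_meas : ∀ t ∈ Set.Icc a b, Measurable (Y t))
    (C θ : ℝ) (hC : 0 ≤ C) (hθ : θ ∈ Set.Ioc (1 / 2 : ℝ) 1)
    (hHolder : ∀ s ∈ Set.Icc a b, ∀ t ∈ Set.Icc a b, ∀ x : X,
      ‖Y t x - Y s x‖ ≤ C * |t - s| ^ θ) :
    ∀ ε > (0 : ℝ), ∃ δ > (0 : ℝ), ∀ (n : ℕ) (t : ℕ → ℝ),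
      0 < n → t 0 = a → t n = b →
      (∀ i < n, t i < t (i + 1)) → (∀ i < n, t (i + 1) - t i < δ) →
      |(∑ i ∈ Finset.range n,
          (∫ x, Y (t (i + 1)) x *
              ((starRingEnd ℂ) (Y (t (i + 1)) x)
                  * ((‖Y (t (i + 1)) x‖ ^ (p - 2) : ℝ) : ℂ)
                - (starRingEnd ℂ) (Y (t i) x)
                  * ((‖Y (t i) x‖ ^ (p - 2) : ℝ) : ℂ)) ∂μ).re)
        - ((p - 1) / p) *
            ((∫ x, ‖Y b x‖ ^ p ∂μ) - ∫ x, ‖Y a x‖ ^ p ∂μ)|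
        < ε := by
  obtain ⟨M, hM⟩ := hYa_bdd
  have hθ2 : 1 < 2 * θ := by linarith [hθ.1]
  set R := max M 0 + C * (b - a) ^ θ
  have hR : ∀ s ∈ Set.Icc a b, ∀ x, ‖Y s x‖ ≤ R := fun s hs x ↦
    norm_le_add_mul_rpow_of_holder (Y := fun s ↦ Y s x) hC (by linarith) hs
      ((hM x).trans (le_max_left M 0)) (hHolder a ⟨le_rfl, hab.le⟩ s hs x)
  set L := p * R ^ (p - 2) * C ^ 2 * μ.real Set.univ
  intro ε hε
  obtain ⟨δ, hδ, hδε⟩ := exists_pos_mul_rpow_lt (L * (b - a)) (sub_pos.2 hθ2) hε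
  refine ⟨δ, hδ, fun n t _ ht0 htn hlt hmesh ↦ ?_⟩
  have hmem : ∀ i ≤ n, t i ∈ Set.Icc a b := fun i hi ↦
    ht0 ▸ htn ▸ mem_Icc_of_le_succ (fun j hj ↦ (hlt j hj).le) hi
  have hstep : ∀ i < n, |(∫ x, Y (t (i + 1)) x *
      (conj (Y (t (i + 1)) x) * ((‖Y (t (i + 1)) x‖ ^ (p - 2) : ℝ) : ℂ)
        - conj (Y (t i) x) * ((‖Y (t i) x‖ ^ (p - 2) : ℝ) : ℂ)) ∂μ).re
      - ((p - 1) / p * ∫ x, ‖Y (t (i + 1)) x‖ ^ p ∂μ - (p - 1) / p * ∫ x, ‖Y (t i) x‖ ^ p ∂μ)|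
      ≤ L * (t (i + 1) - t i) ^ (2 * θ) := fun i hi ↦ by
    have hΔ : 0 ≤ t (i + 1) - t i := sub_nonneg.2 (hlt i hi).le
    have hs := hmem i hi.le
    have ht := hmem (i + 1) hi
    rw [← mul_sub]
    refine (abs_re_integral_mul_conj_sub_sub_le hp (hY_meas _ ht).aestronglyMeasurable
      (hY_meas _ hs).aestronglyMeasurable (hR _ ht) (hR _ hs)
      (D := C * (t (i + 1) - t i) ^ θ) fun x ↦ ?_).trans_eq ?_
    · simpa [abs_of_nonneg hΔ] using hHolder _ hs _ ht x
    · rw [mul_pow, ← Real.rpow_mul_natCast hΔ, Nat.cast_ofNat, mul_comm θ]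
      ring
  have hsum := abs_sum_sub_sub_le_of_mesh (F := fun s ↦ (p - 1) / p * ∫ x, ‖Y s x‖ ^ p ∂μ)
    (by positivity) hθ2.le (fun j hj ↦ (hlt j hj).le) hmesh hstep
  rw [ht0, htn, ← mul_sub] at hsum
  exact hsum.trans_lt hδε

/-- Convergence of the sums `𝒮`: with `g_t = conj(Y_t)|Y_t|^{p-2}`, the sums
`Σ Re⟨Y_{tᵢ₊₁}, g_{tᵢ₊₁} - g_{tᵢ}⟩` converge to
`((p-1)/p)(‖Y_b‖_{L^p}^p - ‖Y_a‖_{L^p}^p)` as the mesh of the partition tends to `0`. -/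
theorem riemann_sum_S_convergence
    {X : Type*} [MeasurableSpace X] (μ : Measure X) [IsFiniteMeasure μ]
    (p : ℝ) (hp : 2 ≤ p) (a b : ℝ) (hab : a < b)
    (Y : ℝ → X → ℂ)
    (hYa_meas : Measurable (Y a))
    (hYa_bdd : ∃ M : ℝ, ∀ x : X, ‖Y a x‖ ≤ M)
    (hY_meas : ∀ t ∈ Set.Icc a b, Measurable (Y t))
    (C θ : ℝ) (hC : 0 ≤ C) (hθ : θ ∈ Set.Ioc (1 / 2 : ℝ) 1)
    (hHolder : ∀ s ∈ Set.Icc a b, ∀ t ∈ Set.Icc a b, ∀ x : X,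
      ‖Y t x - Y s x‖ ≤ C * |t - s| ^ θ) :
    ∀ ε > (0 : ℝ), ∃ δ > (0 : ℝ), ∀ (n : ℕ) (t : ℕ → ℝ),
      0 < n → t 0 = a → t n = b →
      (∀ i < n, t i < t (i + 1)) → (∀ i < n, t (i + 1) - t i < δ) →
      |(∑ i ∈ Finset.range n,
          (∫ x, Y (t (i + 1)) x *
              ((starRingEnd ℂ) (Y (t (i + 1)) x)
                  * ((‖Y (t (i + 1)) x‖ ^ (p - 2) : ℝ) : ℂ)
                - (starRingEnd ℂ) (Y (t i) x)
                  * ((‖Y (t i) x‖ ^ (p - 2) : ℝ) : ℂ)) ∂μ).re)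
        - ((p - 1) / p) *
            ((∫ x, ‖Y b x‖ ^ p ∂μ) - ∫ x, ‖Y a x‖ ^ p ∂μ)|
        < ε :=
  riemann_sum_S_convergence_general μ p hp a b hab Y hYa_bdd hY_meas C θ hC hθ hHolder
end
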